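/- arXiv:1402.3819 — 2 statements merged into one kernel-verified Lean document; each statement's English description precedes it below -/
import Mathlib

section
/- Let Ω=(0,L), m,α>0, H := span{sinh((x-L)/√(α/m))} ⊂ L²(Ω), and H²_#(Ω) := {u ∈ H²(Ω)∩H¹₀(Ω) : u'(0)=0}. Then the restriction of ℒ = mI - α d²/dx² to H²_#(Ω) is an isomorphism from H²_#(Ω) onto H^⊥, the orthogonal complement of H in L²(Ω). -/
open Set Real intervalIntegral

/-! With `c = √(α / m)`, the function `φ x = sinh ((x - L) / c)` solves `ℒ φ = 0` and vanishes at
`L`. Green's identity turns `∫ (ℒ u) φ` into the boundary term `α [u φ' - u' φ]₀ᴸ`, which vanishes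
for `u ∈ H²_#`. Conversely, for `f ⊥ φ` the variation-of-constants solution of `ℒ u = f` with
`u 0 = u' 0 = 0` satisfies `u L = (c / α) ∫ f φ = 0`, and it is the only one, by uniqueness for
the Cauchy problem of the linear ODE `u'' = (m / α) u - f / α`. -/

lemma exists_continuous_eqOn_Icc {α : Type*} [TopologicalSpace α] {f : ℝ → α} {a b : ℝ}
    (hab : a ≤ b) (hf : ContinuousOn f (Icc a b)) :
    ∃ g : ℝ → α, Continuous g ∧ EqOn g f (Icc a b) :=
  ⟨IccExtend hab ((Icc a b).domRestrict f), hf.domRestrict.Icc_extend',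
    fun x hx => by simp [IccExtend_of_mem hab _ hx, domRestrict]⟩

lemma contDiff_two_of_hasDerivAt {f f' f'' : ℝ → ℝ} (hf : ∀ x, HasDerivAt f (f' x) x)
    (hf' : ∀ x, HasDerivAt f' (f'' x) x) (hf'' : Continuous f'') : ContDiff ℝ 2 f := by
  have hderiv : deriv f = f' := funext fun x => (hf x).deriv
  rw [show (2 : WithTop ℕ∞) = 1 + 1 from rfl, contDiff_succ_iff_deriv, hderiv,
    contDiff_one_iff_deriv, funext fun x => (hf' x).deriv]
  exact ⟨fun x => (hf x).differentiableAt, by simp, fun x => (hf' x).differentiableAt, hf''⟩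

lemma eqOn_zero_of_hasDerivAt_of_hasDerivAt_const_mul {w w' : ℝ → ℝ} {k a b : ℝ}
    (hw : ∀ x ∈ Icc a b, HasDerivAt w (w' x) x)
    (hw' : ∀ x ∈ Icc a b, HasDerivAt w' (k * w x) x) (ha : w a = 0) (ha' : w' a = 0) :
    EqOn w 0 (Icc a b) := by
  -- `(w, w')` solves the linear system `X' = A X`, whose right-hand side is Lipschitz.
  let A : ℝ × ℝ →L[ℝ] ℝ × ℝ :=
    (ContinuousLinearMap.snd ℝ ℝ ℝ).prod (k • ContinuousLinearMap.fst ℝ ℝ ℝ)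
  have hsys : ∀ x ∈ Icc a b, HasDerivAt (fun y => (w y, w' y)) (A (w x, w' x)) x :=
    fun x hx => (hw x hx).prodMk (hw' x hx)
  have hzero : EqOn (fun y => (w y, w' y)) (fun _ => 0) (Icc a b) :=
    ODE_solution_unique (v := fun _ => A) (fun _ => A.lipschitz) (HasDerivAt.continuousOn hsys)
      (fun x hx => (hsys x (Ico_subset_Icc_self hx)).hasDerivWithinAt) continuousOn_const
      (fun x _ => by simpa using hasDerivWithinAt_const x _ (0 : ℝ × ℝ))
      (by simp [ha, ha'])
  exact fun x hx => congrArg Prod.fst (hzero hx)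

lemma ContDiff.continuous_deriv_deriv {f : ℝ → ℝ} (hf : ContDiff ℝ 2 f) :
    Continuous (deriv (deriv f)) :=
  (hf.deriv' (n := 1)).continuous_deriv le_rfl

lemma eqOn_of_contDiff_two_of_sub_mul_deriv_deriv_eq {u v : ℝ → ℝ} {m α a b : ℝ}
    (hα : α ≠ 0) (hu : ContDiff ℝ 2 u) (hv : ContDiff ℝ 2 v) (ha : u a = v a)
    (ha' : deriv u a = deriv v a)
    (h : ∀ x ∈ Icc a b, m * u x - α * deriv (deriv u) x = m * v x - α * deriv (deriv v) x) :
    EqOn u v (Icc a b) := by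
  have hw : ∀ x ∈ Icc a b, HasDerivAt (fun y => u y - v y) (deriv u x - deriv v x) x :=
    fun x _ => (hu.differentiable two_ne_zero x).hasDerivAt.sub
      (hv.differentiable two_ne_zero x).hasDerivAt
  have hw' : ∀ x ∈ Icc a b,
      HasDerivAt (fun y => deriv u y - deriv v y) (m / α * (u x - v x)) x := fun x hx => by
    refine ((hu.differentiable_deriv_two x).hasDerivAt.sub
      (hv.differentiable_deriv_two x).hasDerivAt).congr_deriv ?_
    field_simp
    linear_combination -(h x hx)
  intro x hx
  exact sub_eq_zero.1 (eqOn_zero_of_hasDerivAt_of_hasDerivAt_const_mul hw hw'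
    (sub_eq_zero.2 ha) (sub_eq_zero.2 ha') hx)

theorem integral_mul_deriv_deriv_sub_deriv_deriv_mul {u φ : ℝ → ℝ} {a b : ℝ}
    (hu : ContDiff ℝ 2 u) (hφ : ContDiff ℝ 2 φ) :
    ∫ x in a..b, (u x * deriv (deriv φ) x - deriv (deriv u) x * φ x) =
      (u b * deriv φ b - deriv u b * φ b) - (u a * deriv φ a - deriv u a * φ a) := by
  have hu₂ := hu.continuous_deriv_deriv
  have hφ₂ := hφ.continuous_deriv_deriv
  have hu₁ := hu.differentiable two_ne_zero
  have hφ₁ := hφ.differentiable two_ne_zero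
  have hcont : Continuous fun x => u x * deriv (deriv φ) x - deriv (deriv u) x * φ x :=
    (hu₁.continuous.mul hφ₂).sub (hu₂.mul hφ₁.continuous)
  refine integral_eq_sub_of_hasDerivAt (f := fun x => u x * deriv φ x - deriv u x * φ x)
    (fun x _ => ?_) (hcont.intervalIntegrable _ _)
  refine (((hu₁ x).hasDerivAt.mul (hφ.differentiable_deriv_two x).hasDerivAt).sub
    ((hu.differentiable_deriv_two x).hasDerivAt.mul (hφ₁ x).hasDerivAt)).congr_deriv ?_
  ring

lemma hasDerivAt_sinh_sub_div (a c x : ℝ) :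
    HasDerivAt (fun y => sinh ((y - a) / c)) (cosh ((x - a) / c) / c) x := by
  simpa [div_eq_mul_inv] using (((hasDerivAt_id x).sub_const a).div_const c).sinh

lemma hasDerivAt_cosh_sub_div (a c x : ℝ) :
    HasDerivAt (fun y => cosh ((y - a) / c)) (sinh ((x - a) / c) / c) x := by
  simpa [div_eq_mul_inv] using (((hasDerivAt_id x).sub_const a).div_const c).cosh

lemma deriv_deriv_sinh_sub_div (a c : ℝ) :
    deriv (deriv fun y => sinh ((y - a) / c)) = fun x => sinh ((x - a) / c) / c ^ 2 := by
  have h : deriv (fun y => sinh ((y - a) / c)) = fun x => cosh ((x - a) / c) / c :=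
    funext fun x => (hasDerivAt_sinh_sub_div a c x).deriv
  rw [h]
  funext x
  rw [((hasDerivAt_cosh_sub_div a c x).div_const c).deriv, div_div, sq]

theorem integral_sub_mul_deriv_deriv_mul_sinh_eq_zero {u : ℝ → ℝ} {L m α c : ℝ}
    (hc : c ≠ 0) (hmc : m * c ^ 2 = α) (hu : ContDiff ℝ 2 u) (h0 : u 0 = 0) (hL : u L = 0)
    (h0' : deriv u 0 = 0) :
    ∫ x in 0..L, (m * u x - α * deriv (deriv u) x) * sinh ((x - L) / c) = 0 := by
  set φ : ℝ → ℝ := fun x => sinh ((x - L) / c) with hφ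
  have hφ₂ : ContDiff ℝ 2 φ := by fun_prop
  calc ∫ x in 0..L, (m * u x - α * deriv (deriv u) x) * φ x
      = ∫ x in 0..L, α * (u x * deriv (deriv φ) x - deriv (deriv u) x * φ x) := by
        refine integral_congr fun x _ => ?_
        rw [hφ, deriv_deriv_sinh_sub_div]
        field_simp
        rw [← hmc]
        ring
    _ = 0 := by
        rw [integral_const_mul, integral_mul_deriv_deriv_sub_deriv_deriv_mul hu hφ₂]
        simp [hφ, h0, hL, h0']

/-- Variation of constants for `v'' - v / c ^ 2 = g` with the fundamental solutions
`sinh (x / c)`, `cosh (x / c)`; it is the solution with `v 0 = v' 0 = 0`. -/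
noncomputable def sinhDuhamel (c : ℝ) (g : ℝ → ℝ) (x : ℝ) : ℝ :=
  c * (sinh (x / c) * (∫ t in 0..x, cosh (t / c) * g t) -
    cosh (x / c) * ∫ t in 0..x, sinh (t / c) * g t)

noncomputable def sinhDuhamelDeriv (c : ℝ) (g : ℝ → ℝ) (x : ℝ) : ℝ :=
  cosh (x / c) * (∫ t in 0..x, cosh (t / c) * g t) -
    sinh (x / c) * ∫ t in 0..x, sinh (t / c) * g t

section sinhDuhamel

variable {c : ℝ} {g : ℝ → ℝ}

@[simp] lemma sinhDuhamel_zero : sinhDuhamel c g 0 = 0 := by simp [sinhDuhamel]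

@[simp] lemma sinhDuhamelDeriv_zero : sinhDuhamelDeriv c g 0 = 0 := by simp [sinhDuhamelDeriv]

lemma hasDerivAt_sinhDuhamel (hc : c ≠ 0) (hg : Continuous g) (x : ℝ) :
    HasDerivAt (sinhDuhamel c g) (sinhDuhamelDeriv c g x) x := by
  have hF := ((by fun_prop : Continuous fun t => cosh (t / c) * g t).integral_hasStrictDerivAt
    0 x).hasDerivAt
  have hG := ((by fun_prop : Continuous fun t => sinh (t / c) * g t).integral_hasStrictDerivAt
    0 x).hasDerivAt
  have hs := hasDerivAt_sinh_sub_div 0 c x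
  have hc' := hasDerivAt_cosh_sub_div 0 c x
  simp only [sub_zero] at hs hc'
  refine (((hs.fun_mul hF).fun_sub (hc'.fun_mul hG)).const_mul c).congr_deriv ?_
  rw [sinhDuhamelDeriv]
  field_simp
  ring

lemma hasDerivAt_sinhDuhamelDeriv (hc : c ≠ 0) (hg : Continuous g) (x : ℝ) :
    HasDerivAt (sinhDuhamelDeriv c g) (sinhDuhamel c g x / c ^ 2 + g x) x := by
  have hF := ((by fun_prop : Continuous fun t => cosh (t / c) * g t).integral_hasStrictDerivAt
    0 x).hasDerivAt
  have hG := ((by fun_prop : Continuous fun t => sinh (t / c) * g t).integral_hasStrictDerivAt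
    0 x).hasDerivAt
  have hs := hasDerivAt_sinh_sub_div 0 c x
  have hc' := hasDerivAt_cosh_sub_div 0 c x
  simp only [sub_zero] at hs hc'
  refine ((hc'.fun_mul hF).fun_sub (hs.fun_mul hG)).congr_deriv ?_
  rw [sinhDuhamel]
  field_simp
  linear_combination (c * g x) * cosh_sq_sub_sinh_sq (x / c)

lemma sinhDuhamel_eq_integral (hg : Continuous g) (x : ℝ) :
    sinhDuhamel c g x = -c * ∫ t in 0..x, g t * sinh ((t - x) / c) := by
  have hsplit : (fun t => g t * sinh ((t - x) / c)) = fun t =>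
      cosh (x / c) * (sinh (t / c) * g t) - sinh (x / c) * (cosh (t / c) * g t) := by
    funext t
    rw [sub_div, sinh_sub]
    ring
  rw [hsplit, integral_sub
    (Continuous.intervalIntegrable (by fun_prop) _ _)
    (Continuous.intervalIntegrable (by fun_prop) _ _), integral_const_mul, integral_const_mul,
    sinhDuhamel]
  ring

end sinhDuhamel

theorem exists_contDiff_two_sub_mul_deriv_deriv_eq {L m α c : ℝ} {g : ℝ → ℝ}
    (hα : α ≠ 0) (hc : c ≠ 0) (hmc : m * c ^ 2 = α) (hg : Continuous g)
    (horth : ∫ t in 0..L, g t * sinh ((t - L) / c) = 0) :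
    ∃ u : ℝ → ℝ, ContDiff ℝ 2 u ∧ u 0 = 0 ∧ u L = 0 ∧ deriv u 0 = 0 ∧
      ∀ x, m * u x - α * deriv (deriv u) x = g x := by
  set v := sinhDuhamel c g
  have hv : ∀ x, HasDerivAt (fun y => -v y / α) (-sinhDuhamelDeriv c g x / α) x := fun x =>
    (hasDerivAt_sinhDuhamel hc hg x).neg.div_const α
  have hv' : ∀ x, HasDerivAt (fun y => -sinhDuhamelDeriv c g y / α)
      (-(v x / c ^ 2 + g x) / α) x := fun x =>
    (hasDerivAt_sinhDuhamelDeriv hc hg x).neg.div_const α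
  have hv_cont : Continuous v := continuous_iff_continuousAt.2 fun x =>
    (hasDerivAt_sinhDuhamel hc hg x).continuousAt
  have hderiv : deriv (fun y => -v y / α) = fun x => -sinhDuhamelDeriv c g x / α :=
    funext fun x => (hv x).deriv
  refine ⟨fun y => -v y / α, contDiff_two_of_hasDerivAt hv hv' (by fun_prop), by simp [v],
    ?_, by rw [hderiv]; simp, fun x => ?_⟩
  · simp [v, sinhDuhamel_eq_integral hg, horth]
  · rw [hderiv, (hv' x).deriv]
    field_simp
    rw [← hmc]
    ring

/-- On Ω = (0,L), with m, α > 0, let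
H = span{sinh((x-L)/√(α/m))} ⊂ L²(Ω) and
H²_#(Ω) = {u ∈ H² ∩ H¹₀ : u'(0) = 0}.  The restriction of ℒ = mI - α d²/dx²
to H²_#(Ω) is an isomorphism from H²_#(Ω) onto H^⊥ (the L²-orthogonal
complement of H): ℒ maps H²_# into H^⊥, and every f ∈ H^⊥ has a unique
preimage in H²_#.  (H² regularity modeled by C², L² data by continuity.) -/
theorem stmt2 (L m α : ℝ) (hL : 0 < L) (hm : 0 < m) (hα : 0 < α) :
    -- ℒ maps H²_# into H^⊥
    (∀ u : ℝ → ℝ, ContDiff ℝ 2 u → u 0 = 0 → u L = 0 → deriv u 0 = 0 →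
      ∫ x in (0:ℝ)..L, (m * u x - α * deriv (deriv u) x) *
        Real.sinh ((x - L) / Real.sqrt (α / m)) = 0) ∧
    -- every f ⊥ H has a unique preimage in H²_#
    (∀ f : ℝ → ℝ, ContinuousOn f (Set.Icc 0 L) →
      (∫ x in (0:ℝ)..L, f x * Real.sinh ((x - L) / Real.sqrt (α / m))) = 0 →
      ∃ u : ℝ → ℝ, (ContDiff ℝ 2 u ∧ u 0 = 0 ∧ u L = 0 ∧ deriv u 0 = 0 ∧
        ∀ x ∈ Set.Icc 0 L, m * u x - α * deriv (deriv u) x = f x) ∧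
        ∀ v : ℝ → ℝ, (ContDiff ℝ 2 v ∧ v 0 = 0 ∧ v L = 0 ∧ deriv v 0 = 0 ∧
          ∀ x ∈ Set.Icc 0 L, m * v x - α * deriv (deriv v) x = f x) →
          ∀ x ∈ Set.Icc 0 L, v x = u x) := by
  set c := √(α / m)
  have hc : c ≠ 0 := (Real.sqrt_pos.2 (div_pos hα hm)).ne'
  have hmc : m * c ^ 2 = α := by
    rw [Real.sq_sqrt (div_pos hα hm).le]
    field_simp
  refine ⟨fun u hu h0 hL h0' => integral_sub_mul_deriv_deriv_mul_sinh_eq_zero hc hmc hu h0 hL h0',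
    fun f hf horth => ?_⟩
  obtain ⟨g, hg, hgf⟩ := exists_continuous_eqOn_Icc hL.le hf
  have horth_g : ∫ t in 0..L, g t * sinh ((t - L) / c) = 0 := by
    refine (integral_congr fun t ht => ?_).trans horth
    rw [uIcc_of_le hL.le] at ht
    simp only [hgf ht]
  obtain ⟨u, hu, hu0, huL, hu0', hug⟩ :=
    exists_contDiff_two_sub_mul_deriv_deriv_eq hα.ne' hc hmc hg horth_g
  refine ⟨u, ⟨hu, hu0, huL, hu0', fun x hx => (hug x).trans (hgf hx)⟩, ?_⟩
  rintro v ⟨hv, hv0, -, hv0', hvf⟩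
  exact eqOn_of_contDiff_two_of_sub_mul_deriv_deriv_eq hα.ne' hv hu (hv0.trans hu0.symm)
    (hv0'.trans hu0'.symm) fun x hx => (hvf x hx).trans ((hug x).trans (hgf hx)).symm
end

section
/- Let Ω=(0,L), m,α>0, M := span{e^{-x/√(α/m)}, e^{x/√(α/m)}} ⊂ L²(Ω). Then the operator ℒ = mI - α d²/dx² is an isomorphism from H²₀(Ω) onto M^⊥, the orthogonal complement of M in L²(Ω). -/
/-!
With `k = √(m/α)`, the functions `e^{∓kx}` span the kernel of `ℒ`, so for `u` with zero
Cauchy data at both ends, integrating `(ℒu) e^{∓kx}` by parts twice gives `0`. Conversely,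
variation of parameters gives the solution `u(x) = -(αk)⁻¹ ∫₀ˣ sinh (k(x-t)) f(t) dt` of
`ℒu = f` with `u(0) = u'(0) = 0`; its Cauchy data at `L` are combinations of
`∫₀ᴸ f(t) e^{±kt} dt`, so they vanish exactly when `f ⊥ M`. Uniqueness is uniqueness for the
Cauchy problem of the linear ODE.
-/

open Real Set intervalIntegral

/-- `α (r u - u') e^{r x}` is an antiderivative of `(m u - α u'') e^{r x}` when `α r² = m`. -/
theorem integral_sub_mul_deriv_deriv_mul_exp_eq_zero {m α r a b : ℝ} {u : ℝ → ℝ}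
    (hr : α * r ^ 2 = m) (hu : ContDiff ℝ 2 u) (ha : u a = 0) (hb : u b = 0) (ha' : deriv u a = 0)
    (hb' : deriv u b = 0) :
    ∫ x in a..b, (m * u x - α * deriv (deriv u) x) * exp (r * x) = 0 := by
  have hu₁ : Differentiable ℝ u := hu.differentiable (by norm_num)
  have hu₂ : Differentiable ℝ (deriv u) := hu.differentiable_deriv_two
  have hderiv : ∀ x, HasDerivAt (fun x => α * (r * u x - deriv u x) * exp (r * x))
      ((m * u x - α * deriv (deriv u) x) * exp (r * x)) x := by
    intro x
    have hexp : HasDerivAt (fun x => exp (r * x)) (exp (r * x) * r) x := by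
      simpa using ((hasDerivAt_id x).const_mul r).exp
    refine (((((hu₁ x).hasDerivAt.const_mul r).sub (hu₂ x).hasDerivAt).const_mul α).mul
      hexp).congr_deriv ?_
    simp only [Pi.sub_apply]
    linear_combination (exp (r * x) * u x) * hr
  have hcont : Continuous fun x => (m * u x - α * deriv (deriv u) x) * exp (r * x) := by
    have := (hu.deriv' (n := 1)).continuous_deriv_one
    fun_prop
  rw [integral_eq_sub_of_hasDerivAt (fun x _ => hderiv x) (hcont.intervalIntegrable a b)]
  simp [ha, hb, ha', hb']

section VariationOfParameters

variable (k : ℝ) (F : ℝ → ℝ)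

/-- `∫₀ˣ sinh (k (x - t)) F t dt`, with the kernel expanded so that `x` only enters through
the upper limit and the outer factors. -/
noncomputable def sinhConvolution (x : ℝ) : ℝ :=
  sinh (k * x) * (∫ t in 0..x, cosh (k * t) * F t) -
    cosh (k * x) * ∫ t in 0..x, sinh (k * t) * F t

/-- `∫₀ˣ cosh (k (x - t)) F t dt`, expanded as `sinhConvolution`. -/
noncomputable def coshConvolution (x : ℝ) : ℝ :=
  cosh (k * x) * (∫ t in 0..x, cosh (k * t) * F t) -
    sinh (k * x) * ∫ t in 0..x, sinh (k * t) * F t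

@[simp]
lemma sinhConvolution_zero : sinhConvolution k F 0 = 0 := by
  simp [sinhConvolution]

@[simp]
lemma coshConvolution_zero : coshConvolution k F 0 = 0 := by
  simp [coshConvolution]

variable {k F}

lemma integral_cosh_mul_eq_zero_and_integral_sinh_mul_eq_zero {b : ℝ} (hF : Continuous F)
    (hplus : ∫ x in 0..b, F x * exp (k * x) = 0) (hminus : ∫ x in 0..b, F x * exp (-k * x) = 0) :
    (∫ x in 0..b, cosh (k * x) * F x) = 0 ∧ ∫ x in 0..b, sinh (k * x) * F x = 0 := by
  have hiplus : IntervalIntegrable (fun x => F x * exp (k * x)) MeasureTheory.volume 0 b :=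
    (by fun_prop : Continuous fun x => F x * exp (k * x)).intervalIntegrable 0 b
  have himinus : IntervalIntegrable (fun x => F x * exp (-k * x)) MeasureTheory.volume 0 b :=
    (by fun_prop : Continuous fun x => F x * exp (-k * x)).intervalIntegrable 0 b
  constructor
  · calc (∫ x in 0..b, cosh (k * x) * F x)
          = ((∫ x in 0..b, F x * exp (k * x)) + ∫ x in 0..b, F x * exp (-k * x)) / 2 := by
            rw [← integral_add hiplus himinus, ← integral_div]
            refine integral_congr fun x _ => ?_
            simp only [cosh_eq, neg_mul]
            ring
        _ = 0 := by rw [hplus, hminus]; norm_num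
  · calc (∫ x in 0..b, sinh (k * x) * F x)
          = ((∫ x in 0..b, F x * exp (k * x)) - ∫ x in 0..b, F x * exp (-k * x)) / 2 := by
            rw [← integral_sub hiplus himinus, ← integral_div]
            refine integral_congr fun x _ => ?_
            simp only [sinh_eq, neg_mul]
            ring
        _ = 0 := by rw [hplus, hminus]; norm_num

lemma sinhConvolution_eq_zero_and_coshConvolution_eq_zero {b : ℝ} (hF : Continuous F)
    (hplus : ∫ x in 0..b, F x * exp (k * x) = 0) (hminus : ∫ x in 0..b, F x * exp (-k * x) = 0) :
    sinhConvolution k F b = 0 ∧ coshConvolution k F b = 0 := by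
  obtain ⟨hc, hs⟩ := integral_cosh_mul_eq_zero_and_integral_sinh_mul_eq_zero hF hplus hminus
  simp [sinhConvolution, coshConvolution, hc, hs]

lemma hasDerivAt_sinh_mul (k x : ℝ) :
    HasDerivAt (fun x => sinh (k * x)) (cosh (k * x) * k) x := by
  simpa using ((hasDerivAt_id x).const_mul k).sinh

lemma hasDerivAt_cosh_mul (k x : ℝ) :
    HasDerivAt (fun x => cosh (k * x)) (sinh (k * x) * k) x := by
  simpa using ((hasDerivAt_id x).const_mul k).cosh

lemma hasDerivAt_integral_mul {g : ℝ → ℝ} (hg : Continuous g) (hF : Continuous F) (x : ℝ) :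
    HasDerivAt (fun x => ∫ t in 0..x, g t * F t) (g x * F x) x := by
  have h : Continuous fun t => g t * F t := hg.mul hF
  exact integral_hasDerivAt_right (h.intervalIntegrable _ _) (h.stronglyMeasurableAtFilter _ _)
    h.continuousAt

lemma hasDerivAt_sinhConvolution (hF : Continuous F) (x : ℝ) :
    HasDerivAt (sinhConvolution k F) (k * coshConvolution k F x) x := by
  refine (((hasDerivAt_sinh_mul k x).mul (hasDerivAt_integral_mul (by fun_prop) hF x)).sub
    ((hasDerivAt_cosh_mul k x).mul (hasDerivAt_integral_mul (by fun_prop) hF x))).congr_deriv ?_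
  simp only [coshConvolution]
  ring

lemma hasDerivAt_coshConvolution (hF : Continuous F) (x : ℝ) :
    HasDerivAt (coshConvolution k F) (k * sinhConvolution k F x + F x) x := by
  refine (((hasDerivAt_cosh_mul k x).mul (hasDerivAt_integral_mul (by fun_prop) hF x)).sub
    ((hasDerivAt_sinh_mul k x).mul (hasDerivAt_integral_mul (by fun_prop) hF x))).congr_deriv ?_
  simp only [sinhConvolution]
  linear_combination F x * cosh_sq_sub_sinh_sq (k * x)

lemma deriv_sinhConvolution (hF : Continuous F) :
    deriv (sinhConvolution k F) = fun x => k * coshConvolution k F x :=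
  funext fun x => (hasDerivAt_sinhConvolution hF x).deriv

lemma deriv_coshConvolution (hF : Continuous F) :
    deriv (coshConvolution k F) = fun x => k * sinhConvolution k F x + F x :=
  funext fun x => (hasDerivAt_coshConvolution hF x).deriv

lemma contDiff_sinhConvolution (hF : Continuous F) : ContDiff ℝ 2 (sinhConvolution k F) := by
  have hc : Differentiable ℝ (coshConvolution k F) := fun x =>
    (hasDerivAt_coshConvolution hF x).differentiableAt
  have hs : Continuous (sinhConvolution k F) :=
    continuous_iff_continuousAt.2 fun x => (hasDerivAt_sinhConvolution hF x).continuousAt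
  refine contDiff_succ_iff_deriv (n := 1).2
    ⟨fun x => (hasDerivAt_sinhConvolution hF x).differentiableAt, by simp, ?_⟩
  rw [deriv_sinhConvolution hF]
  refine contDiff_one_iff_deriv.2 ⟨by fun_prop, ?_⟩
  rw [deriv_const_mul_field', deriv_coshConvolution hF]
  fun_prop

end VariationOfParameters

section Existence

variable {m α k b : ℝ}

theorem exists_contDiff_sub_mul_deriv_deriv_eq {F : ℝ → ℝ} (hα : α ≠ 0) (hk : k ≠ 0)
    (hk2 : α * k ^ 2 = m) (hF : Continuous F) (hplus : ∫ x in 0..b, F x * exp (k * x) = 0)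
    (hminus : ∫ x in 0..b, F x * exp (-k * x) = 0) :
    ∃ u : ℝ → ℝ, ContDiff ℝ 2 u ∧ u 0 = 0 ∧ u b = 0 ∧ deriv u 0 = 0 ∧ deriv u b = 0 ∧
      ∀ x, m * u x - α * deriv (deriv u) x = F x := by
  obtain ⟨hS, hC⟩ := sinhConvolution_eq_zero_and_coshConvolution_eq_zero hF hplus hminus
  refine ⟨fun x => -(α * k)⁻¹ * sinhConvolution k F x,
    contDiff_const.mul (contDiff_sinhConvolution hF), by simp, by simp [hS], ?_, ?_, fun x => ?_⟩
    <;> simp only [deriv_const_mul_field', deriv_sinhConvolution hF, deriv_coshConvolution hF]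
  · simp
  · simp [hC]
  · field_simp
    linear_combination sinhConvolution k F x * hk2

theorem exists_contDiff_sub_mul_deriv_deriv_eqOn {f : ℝ → ℝ} (hb : 0 ≤ b) (hα : α ≠ 0)
    (hk : k ≠ 0) (hk2 : α * k ^ 2 = m) (hf : ContinuousOn f (Icc 0 b))
    (hplus : ∫ x in 0..b, f x * exp (k * x) = 0)
    (hminus : ∫ x in 0..b, f x * exp (-k * x) = 0) :
    ∃ u : ℝ → ℝ, ContDiff ℝ 2 u ∧ u 0 = 0 ∧ u b = 0 ∧ deriv u 0 = 0 ∧ deriv u b = 0 ∧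
      ∀ x ∈ Icc 0 b, m * u x - α * deriv (deriv u) x = f x := by
  set F := IccExtend hb ((Icc 0 b).domRestrict f)
  have hFf : EqOn F f (Icc 0 b) := fun x hx => IccExtend_of_mem hb _ hx
  have hF : Continuous F := (continuousOn_iff_continuous_domRestrict.1 hf).Icc_extend'
  have hcongr : ∀ r, ∫ x in 0..b, F x * exp (r * x) = ∫ x in 0..b, f x * exp (r * x) :=
    fun r => integral_congr fun x hx => by rw [uIcc_of_le hb] at hx; rw [hFf hx]
  obtain ⟨u, hu, h0, hb₀, h0', hb', hFu⟩ := exists_contDiff_sub_mul_deriv_deriv_eq hα hk hk2 hF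
    ((hcongr k).trans hplus) ((hcongr (-k)).trans hminus)
  exact ⟨u, hu, h0, hb₀, h0', hb', fun x hx => (hFu x).trans (hFf hx)⟩

end Existence

section Uniqueness

variable {a b : ℝ} {u v : ℝ → ℝ}

/-- Via the first-order system for `(w, w')`, whose vector field is affine, hence Lipschitz. -/
theorem eqOn_of_deriv_deriv_eq_mul_add {c : ℝ} {g : ℝ → ℝ} (hu : ContDiff ℝ 2 u)
    (hv : ContDiff ℝ 2 v) (hu'' : ∀ x ∈ Ico a b, deriv (deriv u) x = c * u x + g x)
    (hv'' : ∀ x ∈ Ico a b, deriv (deriv v) x = c * v x + g x)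
    (ha : u a = v a) (ha' : deriv u a = deriv v a) : EqOn u v (Icc a b) := by
  let T : ℝ × ℝ →L[ℝ] ℝ × ℝ :=
    (ContinuousLinearMap.snd ℝ ℝ ℝ).prod (c • ContinuousLinearMap.fst ℝ ℝ ℝ)
  let V : ℝ → ℝ × ℝ → ℝ × ℝ := fun t p => T p + (0, g t)
  have hV : ∀ t, LipschitzWith ‖T‖₊ (V t) := fun t p q => by
    simpa [V, edist_add_right] using T.lipschitz p q
  have hsol : ∀ w : ℝ → ℝ, ContDiff ℝ 2 w →
      (∀ x ∈ Ico a b, deriv (deriv w) x = c * w x + g x) →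
      ContinuousOn (fun x => (w x, deriv w x)) (Icc a b) ∧
        ∀ t ∈ Ico a b, HasDerivWithinAt (fun x => (w x, deriv w x))
          (V t (w t, deriv w t)) (Ici t) t := by
    intro w hw hw''
    have hw₁ : Differentiable ℝ w := hw.differentiable (by norm_num)
    have hw₂ : Differentiable ℝ (deriv w) := hw.differentiable_deriv_two
    refine ⟨(hw₁.continuous.prodMk hw₂.continuous).continuousOn, fun t ht => ?_⟩
    have hVt : V t (w t, deriv w t) = (deriv w t, deriv (deriv w) t) := by
      simp [V, T, hw'' t ht]
    rw [hVt]
    exact ((hw₁ t).hasDerivAt.prodMk (hw₂ t).hasDerivAt).hasDerivWithinAt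
  obtain ⟨hu₀, hu₁⟩ := hsol u hu hu''
  obtain ⟨hv₀, hv₁⟩ := hsol v hv hv''
  have h := ODE_solution_unique hV hu₀ hu₁ hv₀ hv₁ (by simp [ha, ha'])
  exact fun x hx => congrArg Prod.fst (h hx)

theorem eqOn_of_sub_mul_deriv_deriv_eq {m α : ℝ} {f : ℝ → ℝ} (hα : α ≠ 0)
    (hu : ContDiff ℝ 2 u) (hv : ContDiff ℝ 2 v)
    (hfu : ∀ x ∈ Icc a b, m * u x - α * deriv (deriv u) x = f x)
    (hfv : ∀ x ∈ Icc a b, m * v x - α * deriv (deriv v) x = f x)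
    (ha : u a = v a) (ha' : deriv u a = deriv v a) : EqOn u v (Icc a b) := by
  have h'' : ∀ w : ℝ → ℝ, (∀ x ∈ Icc a b, m * w x - α * deriv (deriv w) x = f x) →
      ∀ x ∈ Ico a b, deriv (deriv w) x = m / α * w x + -f x / α := fun w hw x hx => by
    rw [← hw x (Ico_subset_Icc_self hx)]
    field_simp
    ring
  exact eqOn_of_deriv_deriv_eq_mul_add hu hv (h'' u hfu) (h'' v hfv) ha ha'

end Uniqueness

/-- On Ω = (0,L), with m, α > 0, let
M = span{e^{-x/√(α/m)}, e^{x/√(α/m)}} ⊂ L²(Ω).  The operator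
ℒ = mI - α d²/dx² is an isomorphism from H²₀(Ω) onto M^⊥: ℒ maps
H²₀ = {u ∈ H² : u(0)=u(L)=u'(0)=u'(L)=0} into M^⊥, and every f ∈ M^⊥
has a unique preimage in H²₀.  (H² modeled by C², L² data by continuity.) -/
theorem stmt3 (L m α : ℝ) (hL : 0 < L) (hm : 0 < m) (hα : 0 < α) :
    -- ℒ maps H²₀ into M^⊥
    (∀ u : ℝ → ℝ, ContDiff ℝ 2 u → u 0 = 0 → u L = 0 → deriv u 0 = 0 →
      deriv u L = 0 →
      (∫ x in (0:ℝ)..L, (m * u x - α * deriv (deriv u) x) *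
        Real.exp (-x / Real.sqrt (α / m)) = 0) ∧
      (∫ x in (0:ℝ)..L, (m * u x - α * deriv (deriv u) x) *
        Real.exp (x / Real.sqrt (α / m)) = 0)) ∧
    -- every f ⊥ M has a unique preimage in H²₀
    (∀ f : ℝ → ℝ, ContinuousOn f (Set.Icc 0 L) →
      (∫ x in (0:ℝ)..L, f x * Real.exp (-x / Real.sqrt (α / m))) = 0 →
      (∫ x in (0:ℝ)..L, f x * Real.exp (x / Real.sqrt (α / m))) = 0 →
      ∃ u : ℝ → ℝ, (ContDiff ℝ 2 u ∧ u 0 = 0 ∧ u L = 0 ∧ deriv u 0 = 0 ∧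
        deriv u L = 0 ∧
        ∀ x ∈ Set.Icc 0 L, m * u x - α * deriv (deriv u) x = f x) ∧
        ∀ v : ℝ → ℝ, (ContDiff ℝ 2 v ∧ v 0 = 0 ∧ v L = 0 ∧ deriv v 0 = 0 ∧
          deriv v L = 0 ∧
          ∀ x ∈ Set.Icc 0 L, m * v x - α * deriv (deriv v) x = f x) →
          ∀ x ∈ Set.Icc 0 L, v x = u x) := by
  set k := sqrt (m / α)
  have hmα : 0 < m / α := div_pos hm hα
  have hk2 : α * k ^ 2 = m := by rw [sq_sqrt hmα.le]; field_simp
  have hscale : ∀ x, x / sqrt (α / m) = k * x := fun x => by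
    rw [← inv_div m α, sqrt_inv, div_inv_eq_mul, mul_comm]
  refine ⟨fun u hu hu0 huL hu0' huL' => ?_, fun f hf hminus hplus => ?_⟩
  · simp only [hscale, mul_neg, ← neg_mul]
    exact ⟨integral_sub_mul_deriv_deriv_mul_exp_eq_zero 
      (by linear_combination hk2 : α * (-k) ^ 2 = m)
      hu hu0 huL hu0' huL', integral_sub_mul_deriv_deriv_mul_exp_eq_zero hk2 hu hu0 huL hu0' huL'⟩
  · simp only [hscale, mul_neg, ← neg_mul] at hminus hplus
    obtain ⟨u, hu, hu0, huL, hu0', huL', hfu⟩ := exists_contDiff_sub_mul_deriv_deriv_eqOn hL.le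
      hα.ne' (sqrt_pos.2 hmα).ne' hk2 hf hplus hminus
    exact ⟨u, ⟨hu, hu0, huL, hu0', huL', hfu⟩, fun v ⟨hv, hv0, _, hv0', _, hfv⟩ =>
      eqOn_of_sub_mul_deriv_deriv_eq hα.ne' hv hu hfv hfu (hv0.trans hu0.symm)
        (hv0'.trans hu0'.symm)⟩
end
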